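/- arXiv:2203.12838 — 4 statements merged into one kernel-verified Lean document; each statement's English description precedes it below -/
import Mathlib

section
/- Let P be an e-permutation of (d, f) with partition pair (S_D, S_F). Suppose a, b ∈ S_D with a < b and P a < P b, and let P' = P ∘ (swap a b) be the tuple obtained by interchanging the values of P at a and b. Then P' is an e-permutation of (d, f), the pair (S_D, S_F) is a partition pair for P', P' dominates P, and P' ≠ P. -/
/-- `P` dominates `Q`: every partial sum `∑_{i ≤ j} P i` is at least the
corresponding partial sum of `Q`, and the total sums agree. -/
def Dominates {n : ℕ} (P Q : Fin n → ℚ) : Prop :=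
  (∀ j : Fin n, ∑ i ∈ Finset.Iic j, Q i ≤ ∑ i ∈ Finset.Iic j, P i) ∧
  (∑ i, P i = ∑ i, Q i)
/-- The multiset of values of a slope tuple. -/
def valMS {n : ℕ} (s : Fin n → ℚ) : Multiset ℚ :=
  Finset.univ.val.map s

/-- `P` is an `e`-permutation of `(d, f)`. -/
def IsEPerm {m k : ℕ} (d : Fin m → ℚ) (f : Fin k → ℚ) (e P : Fin (m + k) → ℚ) : Prop :=
  valMS P = valMS d + valMS f ∧
  Dominates P e ∧
  ∀ i : Fin (m + k), (P i < e i → P i ∈ valMS d) ∧ (e i < P i → P i ∈ valMS f)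

/-- `(SD, SF)` is a partition pair for the `e`-permutation `P` of `(d, f)`. -/
def IsPartitionPair {m k : ℕ} (d : Fin m → ℚ) (f : Fin k → ℚ) (e P : Fin (m + k) → ℚ)
    (SD SF : Finset (Fin (m + k))) : Prop :=
  Disjoint SD SF ∧ SD ∪ SF = Finset.univ ∧
  SD.val.map P = valMS d ∧ (∀ i ∈ SD, P i ≤ e i) ∧
  SF.val.map P = valMS f ∧ (∀ j ∈ SF, e j ≤ P j)

/-- `P` is `(SD, SF)`-sorted: its values along `SD` (in increasing index order)
are exactly `d 0, …, d (m-1)`, and similarly for `SF` and `f`. -/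
def IsSortedPair {m k : ℕ} (d : Fin m → ℚ) (f : Fin k → ℚ) (P : Fin (m + k) → ℚ)
    (SD SF : Finset (Fin (m + k))) : Prop :=
  ((SD.sort (· ≤ ·)).map P = List.ofFn d) ∧ ((SF.sort (· ≤ ·)).map P = List.ofFn f)

/-- Swapping an out-of-order pair of values of `P` at indices in `SD` yields a strictly
larger `e`-permutation of `(d, f)` with the same partition pair. -/
theorem swap_in_SD {m k : ℕ} (d : Fin m → ℚ) (f : Fin k → ℚ) (e P : Fin (m + k) → ℚ)
    (hd : Antitone d) (hf : Antitone f) (he : Antitone e)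
    (SD SF : Finset (Fin (m + k)))
    (hP : IsEPerm d f e P) (hpair : IsPartitionPair d f e P SD SF)
    (a b : Fin (m + k)) (ha : a ∈ SD) (hb : b ∈ SD) (hab : a < b) (hPab : P a < P b) :
    IsEPerm d f e (P ∘ Equiv.swap a b) ∧
    IsPartitionPair d f e (P ∘ Equiv.swap a b) SD SF ∧
    Dominates (P ∘ Equiv.swap a b) P ∧
    P ∘ Equiv.swap a b ≠ P := by
  obtain ⟨hval, hdom, hcond⟩ := hP
  obtain ⟨hdisj, hunion, hSDmap, hSDle, hSFmap, hSFge⟩ := hpair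
  have hne : a ≠ b := ne_of_lt hab
  set σ := Equiv.swap a b with hσ
  have hσa : σ a = b := Equiv.swap_apply_left a b
  have hσb : σ b = a := Equiv.swap_apply_right a b
  have hσfix : ∀ i, i ≠ a → i ≠ b → σ i = i := fun i h1 h2 =>
    Equiv.swap_apply_of_ne_of_ne h1 h2
  -- Sum over a swap-stable set
  have sum_swap_eq : ∀ (s : Finset (Fin (m + k))), (a ∈ s ↔ b ∈ s) →
      ∑ i ∈ s, P (σ i) = ∑ i ∈ s, P i := by
    intro s h
    refine Finset.sum_equiv σ ?_ ?_
    · intro i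
      rcases eq_or_ne i a with rfl | hia
      · rw [hσa]; exact h
      rcases eq_or_ne i b with rfl | hib
      · rw [hσb]; exact h.symm
      · rw [hσfix i hia hib]
    · intro i _; rfl
  have sum_swap_mem : ∀ (s : Finset (Fin (m + k))), a ∈ s → b ∉ s →
      ∑ i ∈ s, P (σ i) = (∑ i ∈ s, P i) + (P b - P a) := by
    intro s has hbs
    have h1 : ∑ i ∈ s, P (σ i) = P (σ a) + ∑ i ∈ s.erase a, P (σ i) :=
      (Finset.add_sum_erase _ _ has).symm
    have h2 : ∑ i ∈ s, P i = P a + ∑ i ∈ s.erase a, P i :=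
      (Finset.add_sum_erase _ _ has).symm
    have h3 : ∑ i ∈ s.erase a, P (σ i) = ∑ i ∈ s.erase a, P i := by
      apply Finset.sum_congr rfl
      intro i hi
      have hia : i ≠ a := Finset.ne_of_mem_erase hi
      have hib : i ≠ b := fun h => hbs (h ▸ Finset.mem_of_mem_erase hi)
      rw [hσfix i hia hib]
    rw [h1, h3, hσa, h2]; ring
  -- domination of P' over P
  have hdomP : Dominates (P ∘ σ) P := by
    constructor
    · intro j
      rcases le_or_gt b j with hbj | hjb
      · have : ∑ i ∈ Finset.Iic j, P (σ i) = ∑ i ∈ Finset.Iic j, P i := by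
          apply sum_swap_eq
          simp only [Finset.mem_Iic]
          exact ⟨fun _ => hbj, fun _ => (le_of_lt hab).trans hbj⟩
        simp only [Function.comp]; rw [this]
      rcases le_or_gt a j with haj | hja
      · have : ∑ i ∈ Finset.Iic j, P (σ i)
            = (∑ i ∈ Finset.Iic j, P i) + (P b - P a) := by
          apply sum_swap_mem
          · simpa using haj
          · simp only [Finset.mem_Iic]; exact not_le.mpr hjb
        simp only [Function.comp]; rw [this]
        linarith
      · have : ∑ i ∈ Finset.Iic j, P (σ i) = ∑ i ∈ Finset.Iic j, P i := by
          apply sum_swap_eq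
          simp only [Finset.mem_Iic]
          constructor
          · intro h; exact absurd h (not_le.mpr hja)
          · intro h; exact absurd h (not_le.mpr (hja.trans hab))
        simp only [Function.comp]; rw [this]
    · have : ∑ i, P (σ i) = ∑ i, P i := sum_swap_eq Finset.univ (by simp)
      simpa [Function.comp] using this
  -- multisets of values
  have hSDσ : SD.map (σ : Fin (m + k) ↪ Fin (m + k)) = SD := by
    apply Finset.map_perm
    intro x hx
    simp only [Set.mem_setOf_eq] at hx
    by_contra hxs
    exact hx (hσfix x (fun h => hxs (h ▸ ha)) (fun h => hxs (h ▸ hb)))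
  have hSDmap' : SD.val.map (P ∘ σ) = valMS d := by
    have : SD.val.map (P ∘ σ) = (SD.val.map σ).map P := by
      rw [Multiset.map_map]
    rw [this]
    have : SD.val.map σ = SD.val := by
      have := congrArg Finset.val hSDσ
      simpa [Finset.map_val] using this
    rw [this, hSDmap]
  have hSFmap' : SF.val.map (P ∘ σ) = valMS f := by
    rw [← hSFmap]
    apply Multiset.map_congr rfl
    intro x hx
    have hxSF : x ∈ SF := hx
    have hxa : x ≠ a := fun h => (Finset.disjoint_left.mp hdisj ha) (h ▸ hxSF)
    have hxb : x ≠ b := fun h => (Finset.disjoint_left.mp hdisj hb) (h ▸ hxSF)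
    simp [Function.comp, hσfix x hxa hxb]
  have hvalσ : valMS (P ∘ σ) = valMS P := by
    unfold valMS
    have : (Finset.univ : Finset (Fin (m + k))).val.map (P ∘ σ)
        = ((Finset.univ : Finset (Fin (m + k))).val.map σ).map P := by
      rw [Multiset.map_map]
    rw [this]
    congr 1
    have : Finset.univ.map (σ : Fin (m + k) ↪ Fin (m + k)) = Finset.univ :=
      Finset.map_univ_equiv σ
    have := congrArg Finset.val this
    simpa [Finset.map_val] using this
  -- key inequalities
  have hPbeb : P b ≤ e b := hSDle b hb
  have hPaea : P a ≤ e a := hSDle a ha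
  have heba : e b ≤ e a := he (le_of_lt hab)
  have hPbd : P b ∈ valMS d := by
    rw [← hSDmap]
    exact Multiset.mem_map.mpr ⟨b, hb, rfl⟩
  have hPad : P a ∈ valMS d := by
    rw [← hSDmap]
    exact Multiset.mem_map.mpr ⟨a, ha, rfl⟩
  refine ⟨⟨?_, ?_, ?_⟩, ⟨hdisj, hunion, hSDmap', ?_, hSFmap', ?_⟩, hdomP, ?_⟩
  · rw [hvalσ, hval]
  · exact ⟨fun j => (hdom.1 j).trans (hdomP.1 j), hdomP.2.trans hdom.2⟩
  · intro i
    rcases eq_or_ne i a with rfl | hia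
    · simp only [Function.comp, hσa]
      exact ⟨fun _ => hPbd, fun h => absurd (hPbeb.trans heba) (not_le.mpr h)⟩
    rcases eq_or_ne i b with rfl | hib
    · simp only [Function.comp, hσb]
      exact ⟨fun _ => hPad, fun h => absurd (hPab.le.trans hPbeb) (not_le.mpr h)⟩
    · simp only [Function.comp, hσfix i hia hib]
      exact hcond i
  · intro i hi
    rcases eq_or_ne i a with rfl | hia
    · simp only [Function.comp, hσa]; exact hPbeb.trans heba
    rcases eq_or_ne i b with rfl | hib
    · simp only [Function.comp, hσb]; exact hPab.le.trans hPbeb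
    · simp only [Function.comp, hσfix i hia hib]; exact hSDle i hi
  · intro j hj
    have hja : j ≠ a := fun h => (Finset.disjoint_left.mp hdisj ha) (h ▸ hj)
    have hjb : j ≠ b := fun h => (Finset.disjoint_left.mp hdisj hb) (h ▸ hj)
    simp only [Function.comp, hσfix j hja hjb]
    exact hSFge j hj
  · intro h
    have := congrFun h a
    simp only [Function.comp, hσa] at this
    exact absurd this (ne_of_gt hPab)
end

section
/- Let P be an e-permutation of (d, f) with partition pair (S_D, S_F). Suppose a, b ∈ S_F with a < b and P a < P b, and let P' = P ∘ (swap a b) be the tuple obtained by interchanging the values of P at a and b. Then P' is an e-permutation of (d, f), the pair (S_D, S_F) is a partition pair for P', P' dominates P, and P' ≠ P. -/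
open Finset Equiv

lemma Dominates.trans {n : ℕ} {P Q R : Fin n → ℚ} (hPQ : Dominates P Q) (hQR : Dominates Q R) :
    Dominates P R :=
  ⟨fun j => (hQR.1 j).trans (hPQ.1 j), hPQ.2.trans hQR.2⟩

lemma apply_swap_eq_add_ite {α β : Type*} [DecidableEq α] [AddCommGroup β] (P : α → β)
    {a b : α} (hab : a ≠ b) (i : α) :
    P (swap a b i) = P i + (if i = a then P b - P a else 0) + (if i = b then P a - P b else 0) := by
  rcases eq_or_ne i a with rfl | hia
  · simp [hab]
  rcases eq_or_ne i b with rfl | hib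
  · simp [hia]
  · simp [swap_apply_of_ne_of_ne hia hib, hia, hib]

lemma sum_comp_swap {α β : Type*} [DecidableEq α] [AddCommGroup β] (P : α → β)
    {a b : α} (hab : a ≠ b) (s : Finset α) :
    ∑ i ∈ s, P (swap a b i) =
      ∑ i ∈ s, P i + (if a ∈ s then P b - P a else 0) + (if b ∈ s then P a - P b else 0) := by
  simp only [apply_swap_eq_add_ite P hab, sum_add_distrib, sum_ite_eq']

lemma dominates_comp_swap {n : ℕ} (P : Fin n → ℚ) {a b : Fin n} (hab : a < b)
    (hP : P a ≤ P b) : Dominates (P ∘ swap a b) P := by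
  refine ⟨fun j => ?_, ?_⟩
  · simp only [Function.comp_apply, sum_comp_swap P hab.ne, mem_Iic]
    rcases le_or_gt b j with hbj | hjb
    · simp only [hab.le.trans hbj, hbj, if_true]
      linarith
    rcases le_or_gt a j with haj | hja
    · simp only [haj, not_le.mpr hjb, if_true, if_false]
      linarith
    · simp [not_le.mpr hja, not_le.mpr (hja.trans hab)]
  · simp only [Function.comp_apply, sum_comp_swap P hab.ne, mem_univ, if_true]
    ring

lemma Finset.map_val_comp_swap {α β : Type*} [DecidableEq α] {s : Finset α} {a b : α}
    (ha : a ∈ s) (hb : b ∈ s) (P : α → β) : s.val.map (P ∘ swap a b) = s.val.map P := by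
  have hs : s.map (swap a b).toEmbedding = s := by
    refine map_perm fun x hx => ?_
    obtain ⟨-, rfl | rfl⟩ := swap_apply_ne_self_iff.mp hx
    exacts [ha, hb]
  conv_rhs => rw [← hs]
  rw [map_val, Multiset.map_map]
  rfl

lemma Finset.map_val_comp_swap_of_notMem {α β : Type*} [DecidableEq α] {s : Finset α} {a b : α}
    (ha : a ∉ s) (hb : b ∉ s) (P : α → β) : s.val.map (P ∘ swap a b) = s.val.map P :=
  Multiset.map_congr rfl fun _ hi =>
    congr_arg P (swap_apply_of_ne_of_ne (ne_of_mem_of_not_mem hi ha) (ne_of_mem_of_not_mem hi hb))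

section PartitionPair

variable {m k : ℕ} {d : Fin m → ℚ} {f : Fin k → ℚ} {e P : Fin (m + k) → ℚ}
  {SD SF : Finset (Fin (m + k))}

lemma IsPartitionPair.isEPerm (hpair : IsPartitionPair d f e P SD SF) (hdom : Dominates P e) :
    IsEPerm d f e P := by
  obtain ⟨hdisj, hunion, hSD, hSDle, hSF, hSFge⟩ := hpair
  refine ⟨?_, hdom, fun i => ?_⟩
  · rw [valMS, ← hunion, ← disjUnion_eq_union _ _ hdisj, disjUnion_val, Multiset.map_add, hSD, hSF]
  rcases mem_union.mp (hunion ▸ mem_univ i : i ∈ SD ∪ SF) with hi | hi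
  · refine ⟨fun _ => hSD ▸ Multiset.mem_map_of_mem P hi, fun h => ?_⟩
    exact absurd (hSDle i hi) (not_le.mpr h)
  · refine ⟨fun h => absurd (hSFge i hi) (not_le.mpr h), fun _ => ?_⟩
    exact hSF ▸ Multiset.mem_map_of_mem P hi

lemma IsPartitionPair.comp_swap (hpair : IsPartitionPair d f e P SD SF) (he : Antitone e)
    {a b : Fin (m + k)} (ha : a ∈ SF) (hb : b ∈ SF) (hab : a < b) (hPab : P a ≤ P b) :
    IsPartitionPair d f e (P ∘ swap a b) SD SF := by
  obtain ⟨hdisj, hunion, hSD, hSDle, hSF, hSFge⟩ := hpair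
  have haSD : a ∉ SD := disjoint_right.mp hdisj ha
  have hbSD : b ∉ SD := disjoint_right.mp hdisj hb
  refine ⟨hdisj, hunion, (SD.map_val_comp_swap_of_notMem haSD hbSD P).trans hSD, fun i hi => ?_,
    (SF.map_val_comp_swap ha hb P).trans hSF, fun j hj => ?_⟩
  · rw [Function.comp_apply, swap_apply_of_ne_of_ne (ne_of_mem_of_not_mem hi haSD)
      (ne_of_mem_of_not_mem hi hbSD)]
    exact hSDle i hi
  · have hea := hSFge a ha
    have heb : e b ≤ e a := he hab.le
    rcases eq_or_ne j a with rfl | hja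
    · simp only [Function.comp_apply, swap_apply_left]
      linarith
    rcases eq_or_ne j b with rfl | hjb
    · simp only [Function.comp_apply, swap_apply_right]
      linarith
    · rw [Function.comp_apply, swap_apply_of_ne_of_ne hja hjb]
      exact hSFge j hj

end PartitionPair

theorem swap_in_SF_general {m k : ℕ} (d : Fin m → ℚ) (f : Fin k → ℚ) (e P : Fin (m + k) → ℚ)
    (he : Antitone e)
    (SD SF : Finset (Fin (m + k)))
    (hP : IsEPerm d f e P) (hpair : IsPartitionPair d f e P SD SF)
    (a b : Fin (m + k)) (ha : a ∈ SF) (hb : b ∈ SF) (hab : a < b) (hPab : P a < P b) :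
    IsEPerm d f e (P ∘ Equiv.swap a b) ∧
    IsPartitionPair d f e (P ∘ Equiv.swap a b) SD SF ∧
    Dominates (P ∘ Equiv.swap a b) P ∧
    P ∘ Equiv.swap a b ≠ P := by
  have hpair' := hpair.comp_swap he ha hb hab hPab.le
  have hdom := dominates_comp_swap P hab hPab.le
  refine ⟨hpair'.isEPerm (hdom.trans hP.2.1), hpair', hdom, fun h => hPab.ne' ?_⟩
  simpa using congr_fun h a

/-- Swapping an out-of-order pair of values of `P` at indices in `SF` yields a strictly
larger `e`-permutation of `(d, f)` with the same partition pair. -/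
theorem swap_in_SF {m k : ℕ} (d : Fin m → ℚ) (f : Fin k → ℚ) (e P : Fin (m + k) → ℚ)
    (hd : Antitone d) (hf : Antitone f) (he : Antitone e)
    (SD SF : Finset (Fin (m + k)))
    (hP : IsEPerm d f e P) (hpair : IsPartitionPair d f e P SD SF)
    (a b : Fin (m + k)) (ha : a ∈ SF) (hb : b ∈ SF) (hab : a < b) (hPab : P a < P b) :
    IsEPerm d f e (P ∘ Equiv.swap a b) ∧
    IsPartitionPair d f e (P ∘ Equiv.swap a b) SD SF ∧
    Dominates (P ∘ Equiv.swap a b) P ∧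
    P ∘ Equiv.swap a b ≠ P :=
  swap_in_SF_general d f e P he SD SF hP hpair a b ha hb hab hPab
end

section
/- Assume m ≥ 1 and let μ = d (m−1) denote the minimal value of the antitone tuple d. Let g : Fin (m+k) → ℚ be the nonincreasing rearrangement of the concatenation of d and f (modelling HN(D ⊕ F)). If there exists an e-permutation of (d, f), then e i = g i for every index i with g i < μ. -/
/-!
Let `μ` be the minimal slope of `d`. By condition (iii), wherever `P` or `e` is below `μ`
we must have `e ≤ P`, since a slope of `d` cannot lie below `μ`. The indices where `g`, resp. `e`,
is below `μ` form terminal segments `A`, `B`; the set `C` where `P < μ` has the size of `A`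
and lies in `B`, so `A ⊆ B`. Thus `e ≤ P` on `A`, while domination applied to the initial
segment `Aᶜ` and equality of total sums give `∑_A P ≤ ∑_A e`; hence `e = P` on `A`, so `A = C`.
Now `e` and `g` are both antitone on `A` with the same multiset of values there, so they agree.
-/

open Finset

theorem Finset.subset_of_isUpperSet_of_card_le {α : Type*} [LinearOrder α] {s t : Finset α}
    (hs : IsUpperSet (s : Set α)) (ht : IsUpperSet (t : Set α)) (h : #s ≤ #t) : s ⊆ t := by
  rcases hs.total ht with hst | hts
  · exact_mod_cast hst
  · exact (eq_of_subset_of_card_le (by exact_mod_cast hts) h).ge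

theorem Finset.eqOn_of_antitoneOn_of_map_eq {ι α : Type*} [LinearOrder ι] [LinearOrder α]
    {s : Finset ι} {u v : ι → α} (hu : AntitoneOn u s) (hv : AntitoneOn v s)
    (h : s.val.map u = s.val.map v) : Set.EqOn u v s := by
  have hsorted : (s.sort (· ≤ ·)).Pairwise (· ≤ ·) := s.pairwise_sort _
  have hperm : ((s.sort (· ≤ ·)).map u).Perm ((s.sort (· ≤ ·)).map v) := by
    rw [← Multiset.coe_eq_coe, ← Multiset.map_coe, ← Multiset.map_coe, s.sort_eq, h]
  have antitone_sorted : ∀ {w : ι → α}, AntitoneOn w s →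
      ((s.sort (· ≤ ·)).map w).Pairwise (· ≥ ·) := fun hw => by
    rw [List.pairwise_map]
    exact hsorted.imp_of_mem fun ha hb hab =>
      hw ((mem_sort _).mp ha) ((mem_sort _).mp hb) hab
  have heq := List.map_inj_left.mp
    (hperm.eq_of_pairwise' (antitone_sorted hu) (antitone_sorted hv))
  exact fun i hi => heq i ((mem_sort _).mpr hi)

theorem valMS_filter {n : ℕ} (s : Fin n → ℚ) (p : ℚ → Prop) [DecidablePred p] :
    (valMS s).filter p = ({i | p (s i)} : Finset (Fin n)).val.map s := by
  rw [valMS, Multiset.filter_map, filter_val]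
  rfl

theorem Dominates.sum_le_sum_of_isLowerSet {n : ℕ} {P Q : Fin n → ℚ} (h : Dominates P Q)
    {s : Finset (Fin n)} (hs : IsLowerSet (s : Set (Fin n))) :
    ∑ i ∈ s, Q i ≤ ∑ i ∈ s, P i := by
  rcases s.eq_empty_or_nonempty with rfl | hne
  · simp
  · have hIic : s = Iic (s.max' hne) := by
      ext j
      exact ⟨fun hj => mem_Iic.mpr (s.le_max' j hj),
        fun hj => hs (mem_Iic.mp hj) (s.max'_mem hne)⟩
    rw [hIic]
    exact h.1 _

theorem Dominates.sum_le_sum_of_isUpperSet {n : ℕ} {P Q : Fin n → ℚ} (h : Dominates P Q)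
    {s : Finset (Fin n)} (hs : IsUpperSet (s : Set (Fin n))) :
    ∑ i ∈ s, P i ≤ ∑ i ∈ s, Q i := by
  have hcompl := h.sum_le_sum_of_isLowerSet (s := sᶜ) (by simpa using hs.compl)
  have hP := sum_add_sum_compl s P
  have hQ := sum_add_sum_compl s Q
  linarith [h.2]

theorem IsEPerm.le_of_lt_lowerBound {m k : ℕ} {d : Fin m → ℚ} {f : Fin k → ℚ}
    {e P : Fin (m + k) → ℚ} (hP : IsEPerm d f e P) {μ : ℚ} (hμ : ∀ x ∈ valMS d, μ ≤ x)
    {i : Fin (m + k)} (hi : P i < μ ∨ e i < μ) : e i ≤ P i := by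
  by_contra! hlt
  have := hμ _ ((hP.2.2 i).1 hlt)
  rcases hi with hi | hi <;> linarith

theorem isUpperSet_filter_lt_of_antitone {ι α : Type*} [Preorder ι] [Fintype ι] [LinearOrder α]
    {u : ι → α} (hu : Antitone u) (μ : α) :
    IsUpperSet (({i | u i < μ} : Finset ι) : Set ι) := fun _ _ hab ha =>
  mem_filter.mpr ⟨mem_univ _, (hu hab).trans_lt (mem_filter.mp ha).2⟩

/-- If an `e`-permutation of `(d, f)` exists, then `e` agrees with the nonincreasing
rearrangement `g` of the concatenation of `d` and `f` on all indices where `g` is below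
the minimal value `μ = d (m-1)` of `d`. -/
theorem tail_below_min_slope_eq {m k : ℕ} (hm : 1 ≤ m) (d : Fin m → ℚ) (f : Fin k → ℚ)
    (e g : Fin (m + k) → ℚ) (hd : Antitone d) (he : Antitone e)
    (hg : Antitone g) (hgval : valMS g = valMS d + valMS f)
    (hex : ∃ P : Fin (m + k) → ℚ, IsEPerm d f e P) :
    ∀ i : Fin (m + k), g i < d ⟨m - 1, by omega⟩ → e i = g i := by
  obtain ⟨P, hP⟩ := hex
  set μ := d ⟨m - 1, by omega⟩
  have hμ : ∀ x ∈ valMS d, μ ≤ x := by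
    rintro _ hx
    obtain ⟨j, -, rfl⟩ := Multiset.mem_map.mp hx
    exact hd (Fin.mk_le_mk.mpr (by omega))
  have hPg : valMS P = valMS g := hP.1.trans hgval.symm
  set A : Finset (Fin (m + k)) := {i | g i < μ}
  set C : Finset (Fin (m + k)) := {i | P i < μ}
  set B : Finset (Fin (m + k)) := {i | e i < μ}
  have hA : IsUpperSet (A : Set (Fin (m + k))) := isUpperSet_filter_lt_of_antitone hg μ
  have hmapC : C.val.map P = A.val.map g :=
    (valMS_filter P (· < μ)).symm.trans (hPg ▸ valMS_filter g (· < μ))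
  have hcard : #A = #C := by simpa using (congrArg Multiset.card hmapC).symm
  have hCB : C ⊆ B := fun i hi => by
    have hi := (mem_filter.mp hi).2
    exact mem_filter.mpr ⟨mem_univ _, (hP.le_of_lt_lowerBound hμ (.inl hi)).trans_lt hi⟩
  have hAB : A ⊆ B := subset_of_isUpperSet_of_card_le hA
    (isUpperSet_filter_lt_of_antitone he μ)
    (hcard.trans_le (card_le_card hCB))
  have hle : ∀ i ∈ A, e i ≤ P i := fun i hi =>
    hP.le_of_lt_lowerBound hμ (.inr (mem_filter.mp (hAB hi)).2)
  have heP : ∀ i ∈ A, e i = P i := (sum_eq_sum_iff_of_le hle).mp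
    ((sum_le_sum hle).antisymm (hP.2.1.sum_le_sum_of_isUpperSet hA))
  have hAC : A = C := eq_of_subset_of_card_le
    (fun i hi => mem_filter.mpr ⟨mem_univ _, heP i hi ▸ (mem_filter.mp (hAB hi)).2⟩)
    hcard.ge
  have hmap : A.val.map e = A.val.map g := by
    rw [Multiset.map_congr rfl heP, ← hmapC, hAC]
  exact fun i hi => eqOn_of_antitoneOn_of_map_eq (he.antitoneOn _) (hg.antitoneOn _) hmap
    (mem_filter.mpr ⟨mem_univ _, hi⟩)
end

section
/- Assume m ≥ 1 and k ≥ 1, that d is constant with value μ_D (d i = μ_D for all i), that f is constant with value μ_F (f j = μ_F for all j), and that μ_D > μ_F. If there exists an e-permutation of (d, f), then e i = μ_D for every index i < m and e i = μ_F for every index i with m ≤ i < m + k. -/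
/-- Base case of the classification: if `d` is constant of value `μD`, `f` is constant
of value `μF`, `μD > μF`, and an `e`-permutation of `(d, f)` exists, then `e` equals
`μD` on the first `m` indices and `μF` on the remaining `k` indices. -/
theorem ePerm_const_slopes {m k : ℕ} (hm : 1 ≤ m) (hk : 1 ≤ k)
    (d : Fin m → ℚ) (f : Fin k → ℚ) (e : Fin (m + k) → ℚ) (he : Antitone e)
    (μD μF : ℚ) (hdc : ∀ i, d i = μD) (hfc : ∀ j, f j = μF) (hμ : μF < μD)
    (hex : ∃ P : Fin (m + k) → ℚ, IsEPerm d f e P) :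
    ∀ i : Fin (m + k), (i.val < m → e i = μD) ∧ (m ≤ i.val → e i = μF) := by
  obtain ⟨P, hMS, ⟨hdom, htot⟩, hcond⟩ := hex
  have hmemd : ∀ x, x ∈ valMS d → x = μD := by
    intro x hx
    obtain ⟨j, _, hj⟩ := Multiset.mem_map.1 hx
    rw [← hj, hdc]
  have hmemf : ∀ x, x ∈ valMS f → x = μF := by
    intro x hx
    obtain ⟨j, _, hj⟩ := Multiset.mem_map.1 hx
    rw [← hj, hfc]
  have hPval : ∀ i, P i = μD ∨ P i = μF := by
    intro i
    have hmem : P i ∈ valMS P := Multiset.mem_map_of_mem P (Finset.mem_univ i)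
    rw [hMS, Multiset.mem_add] at hmem
    rcases hmem with h | h
    · exact Or.inl (hmemd _ h)
    · exact Or.inr (hmemf _ h)
  -- Step A: if e i ≤ μD then e i ≤ P i
  have hA : ∀ i, e i ≤ μD → e i ≤ P i := by
    intro i hi
    by_contra h
    push_neg at h
    have := hmemd _ ((hcond i).1 h)
    linarith
  -- Step B: if μF ≤ e i then P i ≤ e i
  have hB : ∀ i, μF ≤ e i → P i ≤ e i := by
    intro i hi
    by_contra h
    push_neg at h
    have := hmemf _ ((hcond i).2 h)
    linarith
  -- Step C: e i ≤ μD everywhere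
  have hC : ∀ i, e i ≤ μD := by
    intro i
    by_contra h
    push_neg at h
    have hlt : ∀ x ∈ Finset.Iic i, P x < e x := by
      intro x hx
      have hx' : x ≤ i := Finset.mem_Iic.1 hx
      have hxe : μD < e x := lt_of_lt_of_le h (he hx')
      rcases hPval x with hp | hp <;> rw [hp] <;> linarith
    have hne : (Finset.Iic i).Nonempty := ⟨i, Finset.mem_Iic.2 le_rfl⟩
    have := Finset.sum_lt_sum_of_nonempty hne hlt
    exact absurd (hdom i) (not_le.2 this)
  -- Step D: μF ≤ e i everywhere
  have hD : ∀ i, μF ≤ e i := by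
    intro i
    by_contra h
    push_neg at h
    have hgt : ∀ x : Fin (m + k), i ≤ x → e x < P x := by
      intro x hx
      have hxe : e x < μF := lt_of_le_of_lt (he hx) h
      rcases hPval x with hp | hp <;> rw [hp] <;> linarith
    rcases Nat.eq_zero_or_pos i.val with h0 | h0
    · have hne : Nonempty (Fin (m + k)) := ⟨i⟩
      have : ∀ x ∈ Finset.univ, e x < P x := by
        intro x _
        exact hgt x (by simp [Fin.le_def, h0])
      have := Finset.sum_lt_sum_of_nonempty (Finset.univ_nonempty) this
      exact absurd htot (by linarith)
    · set j : Fin (m + k) := ⟨i.val - 1, by omega⟩ with hj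
      have hmemT : ∀ x : Fin (m + k), x ∈ Finset.univ \ Finset.Iic j ↔ i ≤ x := by
        intro x
        simp only [Finset.mem_sdiff, Finset.mem_univ, true_and, Finset.mem_Iic, Fin.le_def, hj,
          not_le, Fin.lt_def]
        omega
      have hlt2 : ∀ x ∈ Finset.univ \ Finset.Iic j, e x < P x := by
        intro x hx
        exact hgt x ((hmemT x).1 hx)
      have hne2 : (Finset.univ \ Finset.Iic j).Nonempty := ⟨i, (hmemT i).2 le_rfl⟩
      have hstrict := Finset.sum_lt_sum_of_nonempty hne2 hlt2
      have hsd1 := Finset.sum_sdiff (f := P) (Finset.subset_univ (Finset.Iic j))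
      have hsd2 := Finset.sum_sdiff (f := e) (Finset.subset_univ (Finset.Iic j))
      have hd := hdom j
      linarith
  -- P = e pointwise
  have hPE : ∀ i, P i = e i := fun i => le_antisymm (hB i (hD i)) (hA i (hC i))
  have heval : ∀ i, e i = μD ∨ e i = μF := by
    intro i
    rw [← hPE i]
    exact hPval i
  -- total sum of e
  have hsumd : ∑ i, d i = m * μD := by
    rw [Finset.sum_congr rfl (fun i _ => hdc i), Finset.sum_const, Finset.card_univ,
      Fintype.card_fin, nsmul_eq_mul]
  have hsumf : ∑ i, f i = k * μF := by
    rw [Finset.sum_congr rfl (fun i _ => hfc i), Finset.sum_const, Finset.card_univ,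
      Fintype.card_fin, nsmul_eq_mul]
  have hsumP : ∑ i, P i = m * μD + k * μF := by
    have : (valMS P).sum = (valMS d).sum + (valMS f).sum := by rw [hMS, Multiset.sum_add]
    have h1 : (valMS P).sum = ∑ i, P i := rfl
    have h2 : (valMS d).sum = ∑ i, d i := rfl
    have h3 : (valMS f).sum = ∑ i, f i := rfl
    rw [h1, h2, h3, hsumd, hsumf] at this
    exact this
  have hsume : ∑ i, e i = m * μD + k * μF := by rw [← htot, hsumP]
  -- key index values
  have ha : e ⟨m - 1, by omega⟩ = μD := by
    by_contra hcon
    set a : Fin (m + k) := ⟨m - 1, by omega⟩ with hadef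
    have haF : e a = μF := (heval a).resolve_left hcon
    have hupper : ∀ x ∈ Finset.Iio a, e x ≤ μD := fun x _ => hC x
    have hlower : ∀ x ∈ Finset.univ \ Finset.Iio a, e x = μF := by
      intro x hx
      have hax : a ≤ x := by
        simp only [Finset.mem_sdiff, Finset.mem_univ, true_and, Finset.mem_Iio, not_lt] at hx
        exact hx
      have := he hax
      rcases heval x with h' | h' <;> [skip; exact h'] <;> rw [h'] at this ⊢ <;> linarith [haF ▸ this]
    have hcard1 : (Finset.Iio a).card = m - 1 := by rw [Fin.card_Iio]
    have hcard2 : (Finset.univ \ Finset.Iio a).card = k + 1 := by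
      rw [Finset.card_sdiff_of_subset (Finset.subset_univ _), Finset.card_univ, Fintype.card_fin, hcard1]
      omega
    have hb1 : ∑ x ∈ Finset.Iio a, e x ≤ (m - 1 : ℕ) * μD := by
      calc ∑ x ∈ Finset.Iio a, e x ≤ ∑ _x ∈ Finset.Iio a, μD := Finset.sum_le_sum hupper
        _ = (m - 1 : ℕ) * μD := by rw [Finset.sum_const, hcard1, nsmul_eq_mul]
    have hb2 : ∑ x ∈ Finset.univ \ Finset.Iio a, e x = (k + 1 : ℕ) * μF := by
      rw [Finset.sum_congr rfl hlower, Finset.sum_const, hcard2, nsmul_eq_mul]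
    have hsd := Finset.sum_sdiff (f := e) (Finset.subset_univ (Finset.Iio a))
    have hmcast : ((m - 1 : ℕ) : ℚ) = (m : ℚ) - 1 := by
      have : (1 : ℕ) ≤ m := hm
      push_cast [this]; ring
    rw [hmcast] at hb1
    push_cast at hb2
    rw [hsume] at hsd
    nlinarith [hμ]
  have hb : e ⟨m, by omega⟩ = μF := by
    by_contra hcon
    set b : Fin (m + k) := ⟨m, by omega⟩ with hbdef
    have hbD : e b = μD := (heval b).resolve_right hcon
    have hupper : ∀ x ∈ Finset.Iic b, e x = μD := by
      intro x hx
      have hxb : x ≤ b := Finset.mem_Iic.1 hx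
      have := he hxb
      rcases heval x with h' | h' <;> [exact h'; skip] <;> rw [h'] at this ⊢ <;>
        linarith [hbD ▸ this]
    have hlower : ∀ x ∈ Finset.univ \ Finset.Iic b, μF ≤ e x := fun x _ => hD x
    have hcard1 : (Finset.Iic b).card = m + 1 := by rw [Fin.card_Iic]
    have hcard2 : (Finset.univ \ Finset.Iic b).card = k - 1 := by
      rw [Finset.card_sdiff_of_subset (Finset.subset_univ _), Finset.card_univ, Fintype.card_fin, hcard1]
      omega
    have hb1 : ∑ x ∈ Finset.Iic b, e x = (m + 1 : ℕ) * μD := by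
      rw [Finset.sum_congr rfl hupper, Finset.sum_const, hcard1, nsmul_eq_mul]
    have hb2 : (k - 1 : ℕ) * μF ≤ ∑ x ∈ Finset.univ \ Finset.Iic b, e x := by
      calc ((k - 1 : ℕ) : ℚ) * μF = ∑ _x ∈ Finset.univ \ Finset.Iic b, μF := by
            rw [Finset.sum_const, hcard2, nsmul_eq_mul]
        _ ≤ ∑ x ∈ Finset.univ \ Finset.Iic b, e x := Finset.sum_le_sum hlower
    have hsd := Finset.sum_sdiff (f := e) (Finset.subset_univ (Finset.Iic b))
    have hkcast : ((k - 1 : ℕ) : ℚ) = (k : ℚ) - 1 := by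
      have : (1 : ℕ) ≤ k := hk
      push_cast [this]; ring
    rw [hkcast] at hb2
    push_cast at hb1
    rw [hsume] at hsd
    nlinarith [hμ]
  -- conclude
  intro i
  constructor
  · intro him
    have hia : i ≤ (⟨m - 1, by omega⟩ : Fin (m + k)) := by
      simp only [Fin.le_def]; omega
    have := he hia
    rw [ha] at this
    rcases heval i with h' | h'
    · exact h'
    · rw [h'] at this; linarith
  · intro him
    have hbi : (⟨m, by omega⟩ : Fin (m + k)) ≤ i := by
      simp only [Fin.le_def]; omega
    have := he hbi
    rw [hb] at this
    rcases heval i with h' | h'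
    · rw [h'] at this; linarith
    · exact h'
end
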